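/- arXiv:1908.01181 — 9 statements merged into one kernel-verified Lean document; each statement's English description precedes it below -/
import Mathlib

section
/- Let X be a nonempty set, let p ≥ 1, and let f_1,…,f_p : X → ℝ satisfy f_j(x) > 0 for all x ∈ X and all j. Let x̄ ∈ X, let ε > 0, let σ ≥ 1, and let b_1,…,b_p > 0 satisfy b_j ≤ f_j(x̄) ≤ (1+ε)·b_j for all j. Suppose x̂ ∈ X satisfies ∑_{j=1}^p (1/b_j)·f_j(x̂) ≤ σ·∑_{j=1}^p (1/b_j)·f_j(x) for all x ∈ X. Define α_j := max{1, f_j(x̂)/f_j(x̄)} for j = 1,…,p. Then f_j(x̂) ≤ α_j·f_j(x̄) for all j, the sum of α_j over all indices j with α_j > 1 is at most (1+ε)·σ·p, and α_i ≤ σ for at least one index i ∈ {1,…,p}. -/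
/-!
Write `w j = 1 / b j`. On every index where `α j > 1` we have `α j = f j x̂ / f j x̄ ≤ w j * f j x̂`,
so the sum of those `α j` is at most the weighted sum of `x̂`, which is at most `σ` times the
weighted sum of `x̄`, and each term `w j * f j x̄` of the latter is at most `1 + ε`.
If instead `α j > σ` for every `j`, then `f j x̂ > σ * f j x̄` for every `j`, and summing with the
positive weights contradicts the approximation guarantee at `x = x̄`.
-/

open Finset

section WeightedSum

variable {ι : Type*} [Fintype ι] {w u v : ι → ℝ}

theorem exists_le_mul_of_weighted_sum_le [Nonempty ι] {σ : ℝ} (hw : ∀ j, 0 < w j)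
    (h : ∑ j, w j * u j ≤ σ * ∑ j, w j * v j) : ∃ j, u j ≤ σ * v j := by
  by_contra! hlt
  refine h.not_gt ?_
  rw [mul_sum]
  refine sum_lt_sum_of_nonempty univ_nonempty fun j _ => ?_
  rw [mul_left_comm]
  exact mul_lt_mul_of_pos_left (hlt j) (hw j)

theorem weighted_sum_inv_le_card_mul {b : ι → ℝ} {C : ℝ} (hb : ∀ j, 0 < b j)
    (hv : ∀ j, v j ≤ C * b j) : ∑ j, 1 / b j * v j ≤ Fintype.card ι * C :=
  calc ∑ j, 1 / b j * v j ≤ ∑ _j : ι, C := sum_le_sum fun j _ => by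
        rw [one_div, inv_mul_le_iff₀ (hb j), mul_comm]
        exact hv j
    _ = Fintype.card ι * C := by simp

end WeightedSum

section Ratio

variable {a c : ℝ}

theorem le_max_one_div_mul (ha : 0 < a) : c ≤ max 1 (c / a) * a :=
  (div_le_iff₀ ha).1 (le_max_right _ _)

theorem max_one_div_le_inv_mul {b : ℝ} (hb : 0 < b) (hba : b ≤ a) (h : 1 < max 1 (c / a)) :
    max 1 (c / a) ≤ 1 / b * c := by
  have hca : 1 < c / a := by simpa using h
  have hc : 0 ≤ c := (div_pos_iff_of_pos_right (hb.trans_le hba)).1 (one_pos.trans hca) |>.le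
  rw [max_eq_right hca.le, one_div_mul_eq_div]
  exact div_le_div_of_nonneg_left hc hb hba

theorem max_one_div_le {σ : ℝ} (ha : 0 < a) (hσ : 1 ≤ σ) (h : c ≤ σ * a) : max 1 (c / a) ≤ σ :=
  max_le hσ ((div_le_iff₀ ha).2 h)

end Ratio

open Finset in
theorem prop_one_weighted_sum_general
    {X : Type*} (p : ℕ) (hp : 1 ≤ p)
    (f : Fin p → X → ℝ) (hf : ∀ j x, 0 < f j x)
    (xbar : X) (ε : ℝ) (σ : ℝ) (hσ : 1 ≤ σ)
    (b : Fin p → ℝ) (hb : ∀ j, 0 < b j)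
    (hblo : ∀ j, b j ≤ f j xbar) (hbhi : ∀ j, f j xbar ≤ (1 + ε) * b j)
    (xhat : X)
    (hxhat : ∀ x : X, ∑ j, (1 / b j) * f j xhat ≤ σ * ∑ j, (1 / b j) * f j x)
    (α : Fin p → ℝ) (hα : ∀ j, α j = max 1 (f j xhat / f j xbar)) :
    (∀ j, f j xhat ≤ α j * f j xbar) ∧
    (∑ j ∈ univ.filter (fun j => 1 < α j), α j) ≤ (1 + ε) * σ * p ∧
    (∃ i : Fin p, α i ≤ σ) := by
  have : Nonempty (Fin p) := ⟨⟨0, hp⟩⟩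
  refine ⟨fun j => hα j ▸ le_max_one_div_mul (hf j xbar), ?_, ?_⟩
  · calc ∑ j ∈ univ.filter (fun j => 1 < α j), α j
        ≤ ∑ j ∈ univ.filter (fun j => 1 < α j), 1 / b j * f j xhat :=
          sum_le_sum fun j hj => by
            rw [mem_filter, hα j] at hj
            exact hα j ▸ max_one_div_le_inv_mul (hb j) (hblo j) hj.2
      _ ≤ ∑ j, 1 / b j * f j xhat :=
          sum_le_sum_of_subset_of_nonneg (filter_subset _ _) fun j _ _ =>
            mul_nonneg (one_div_pos.2 (hb j)).le (hf j xhat).le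
      _ ≤ σ * ∑ j, 1 / b j * f j xbar := hxhat xbar
      _ ≤ σ * (p * (1 + ε)) := by
          refine mul_le_mul_of_nonneg_left ?_ (zero_le_one.trans hσ)
          simpa using weighted_sum_inv_le_card_mul hb hbhi
      _ = (1 + ε) * σ * p := by ring
  · obtain ⟨i, hi⟩ := exists_le_mul_of_weighted_sum_le (fun j => one_div_pos.2 (hb j)) (hxhat xbar)
    exact ⟨i, hα i ▸ max_one_div_le (hf i xbar) hσ hi⟩

open Finset in
/-- Proposition 3.2: applying a σ-approximation algorithm for the weighted sum
problem with weights 1/b_j, where b_j ≤ f_j(x̄) ≤ (1+ε)·b_j, yields a solution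
that (α₁,…,α_p)-approximates x̄ with ∑_{j : α_j > 1} α_j ≤ (1+ε)·σ·p and
α_i ≤ σ for at least one i. -/
theorem prop_one_weighted_sum
    {X : Type*} [Nonempty X] (p : ℕ) (hp : 1 ≤ p)
    (f : Fin p → X → ℝ) (hf : ∀ j x, 0 < f j x)
    (xbar : X) (ε : ℝ) (hε : 0 < ε) (σ : ℝ) (hσ : 1 ≤ σ)
    (b : Fin p → ℝ) (hb : ∀ j, 0 < b j)
    (hblo : ∀ j, b j ≤ f j xbar) (hbhi : ∀ j, f j xbar ≤ (1 + ε) * b j)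
    (xhat : X)
    (hxhat : ∀ x : X, ∑ j, (1 / b j) * f j xhat ≤ σ * ∑ j, (1 / b j) * f j x)
    (α : Fin p → ℝ) (hα : ∀ j, α j = max 1 (f j xhat / f j xbar)) :
    (∀ j, f j xhat ≤ α j * f j xbar) ∧
    (∑ j ∈ univ.filter (fun j => 1 < α j), α j) ≤ (1 + ε) * σ * p ∧
    (∃ i : Fin p, α i ≤ σ) :=
  prop_one_weighted_sum_general p hp f hf xbar ε σ hσ b hb hblo hbhi xhat hxhat α hα
end

section
/- Let X be a nonempty set, let p ≥ 1, and let f_1,…,f_p : X → ℝ satisfy f_j(x) > 0 for all x ∈ X and all j. Let 0 < LB(j) ≤ f_j(x) ≤ UB(j) hold for all x ∈ X and all j, let ε > 0, and set ε' := ε/p and u_j := ⌊log_{1+ε'}(UB(j)/LB(j))⌋ for each j. Suppose that for every w ∈ ℝ^p with w_j > 0 for all j there is a solution sol(w) ∈ X that minimizes ∑_{j=1}^p w_j·f_j(x) over x ∈ X. Let W be the set of all weight vectors w with w_j = 1/(LB(j)·(1+ε')^{i_j}) where i_j ∈ {0,…,u_j} for all j and i_k = 0 for at least one k, and let P := {sol(w)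 : w ∈ W}. Then for every x' ∈ X there exists x ∈ P such that, setting α_j := max{1, f_j(x)/f_j(x')}, the sum of α_j over all indices j with α_j > 1 is at most p + ε and α_i = 1 for at least one index i (i.e., f_i(x) ≤ f_i(x') for at least one i). -/
/-!
Round each ratio `f j x' / LB j` down to a power `b ^ n j` of `b = 1 + ε'` and shift the exponents
so that the smallest one is `0`; this gives a weight `w ∈ W` for which all the weighted values
`w j * f j x'` lie in one interval `[c, c * b]`. Then `f j (sol w) / f j x' ≤ w j * f j (sol w) / c`,
and optimality of `sol w` bounds the sum of these by `∑ j, w j * f j x' / c ≤ p * b = p + ε`.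
Some coordinate cannot be worse at `sol w` than at `x'`, since otherwise the weighted sum at
`sol w` would exceed the one at `x'`.
-/

open Finset

theorem Real.natCast_le_floor_logb_of_pow_le {b y : ℝ} (hb : 1 < b) {n : ℕ} (h : b ^ n ≤ y) :
    (n : ℤ) ≤ ⌊Real.logb b y⌋ := by
  have hy : 0 < y := (pow_pos (zero_lt_one.trans hb) n).trans_le h
  rw [Int.le_floor, Int.cast_natCast, Real.le_logb_iff_rpow_le hb hy, Real.rpow_natCast]
  exact h

theorem pow_le_div_pow_sub_and_div_pow_sub_le {b y : ℝ} (hb : 0 < b) {m n : ℕ} (hmn : m ≤ n)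
    (hlo : b ^ n ≤ y) (hhi : y < b ^ (n + 1)) :
    b ^ m ≤ y / b ^ (n - m) ∧ y / b ^ (n - m) ≤ b ^ m * b := by
  have hsplit : b ^ n = b ^ m * b ^ (n - m) := by rw [mul_comm, pow_sub_mul_pow b hmn]
  have hpos : 0 < b ^ (n - m) := pow_pos hb _
  constructor
  · rw [le_div_iff₀ hpos, ← hsplit]
    exact hlo
  · rw [div_le_iff₀ hpos, mul_right_comm, ← hsplit, ← pow_succ]
    exact hhi.le

theorem sum_filter_one_lt_max_le {ι : Type*} (s : Finset ι) {r g : ι → ℝ} (hg : ∀ j, 0 ≤ g j)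
    (hrg : ∀ j, 1 < r j → r j ≤ g j) :
    ∑ j ∈ s.filter (fun j => 1 < max 1 (r j)), max 1 (r j) ≤ ∑ j ∈ s, g j := by
  calc ∑ j ∈ s.filter (fun j => 1 < max 1 (r j)), max 1 (r j)
      ≤ ∑ j ∈ s.filter (fun j => 1 < max 1 (r j)), g j := by
        refine sum_le_sum fun j hj => ?_
        have hr : 1 < r j := (lt_max_iff.1 (mem_filter.1 hj).2).resolve_left (lt_irrefl 1)
        rw [max_eq_right hr.le]
        exact hrg j hr
    _ ≤ ∑ j ∈ s, g j := sum_le_sum_of_subset_of_nonneg (filter_subset _ _) fun j _ _ => hg j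

theorem exists_le_of_weighted_sum_le {ι : Type*} [Fintype ι] [Nonempty ι] {w a a' : ι → ℝ}
    (hw : ∀ j, 0 < w j) (h : ∑ j, w j * a j ≤ ∑ j, w j * a' j) : ∃ j, a j ≤ a' j := by
  by_contra! hlt
  have := sum_lt_sum_of_nonempty univ_nonempty fun j _ => mul_lt_mul_of_pos_left (hlt j) (hw j)
  linarith

theorem sum_filter_max_one_div_le_card_mul {ι : Type*} [Fintype ι] {w a a' : ι → ℝ} {c b : ℝ}
    (hw : ∀ j, 0 < w j) (ha : ∀ j, 0 ≤ a j) (hc : 0 < c)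
    (hlo : ∀ j, c ≤ w j * a' j) (hhi : ∀ j, w j * a' j ≤ c * b)
    (h : ∑ j, w j * a j ≤ ∑ j, w j * a' j) :
    ∑ j ∈ univ.filter (fun j => 1 < max 1 (a j / a' j)), max 1 (a j / a' j) ≤
      Fintype.card ι * b := by
  have ha' : ∀ j, 0 < a' j := fun j => pos_of_mul_pos_right (hc.trans_le (hlo j)) (hw j).le
  have hratio : ∀ j, a j / a' j ≤ w j * a j / c := fun j => by
    rw [div_le_div_iff₀ (ha' j) hc]
    nlinarith [hlo j, ha j]
  calc ∑ j ∈ univ.filter (fun j => 1 < max 1 (a j / a' j)), max 1 (a j / a' j)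
      ≤ ∑ j, w j * a j / c :=
        sum_filter_one_lt_max_le _ (fun j => div_nonneg (mul_nonneg (hw j).le (ha j)) hc.le)
          fun j _ => hratio j
    _ = (∑ j, w j * a j) / c := (sum_div _ _ _).symm
    _ ≤ (∑ j, w j * a' j) / c := div_le_div_of_nonneg_right h hc.le
    _ ≤ (∑ _j : ι, c * b) / c := div_le_div_of_nonneg_right (sum_le_sum fun j _ => hhi j) hc.le
    _ = Fintype.card ι * b := by
        rw [sum_const, card_univ, nsmul_eq_mul]
        field_simp

open Finset in
theorem multi_factor_approx_min_exact_ws_general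
    {X : Type*} (p : ℕ) (hp : 1 ≤ p)
    (f : Fin p → X → ℝ) (hf : ∀ j x, 0 < f j x)
    (LB UB : Fin p → ℝ) (hLB : ∀ j, 0 < LB j)
    (hlo : ∀ x j, LB j ≤ f j x) (hhi : ∀ x j, f j x ≤ UB j)
    (ε : ℝ) (hε : 0 < ε)
    (ε' : ℝ) (hε' : ε' = ε / p)
    (u : Fin p → ℕ) (hu : ∀ j, (u j : ℤ) = ⌊Real.logb (1 + ε') (UB j / LB j)⌋)
    (sol : (Fin p → ℝ) → X)
    (hsol : ∀ w : Fin p → ℝ, (∀ j, 0 < w j) →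
      ∀ x : X, ∑ j, w j * f j (sol w) ≤ ∑ j, w j * f j x)
    (W : Set (Fin p → ℝ))
    (hW : W = {w | ∃ i : Fin p → ℕ, (∀ j, i j ≤ u j) ∧ (∃ k, i k = 0) ∧
      ∀ j, w j = 1 / (LB j * (1 + ε') ^ (i j))}) :
    ∀ x' : X, ∃ w ∈ W,
      (∑ j ∈ univ.filter (fun j => 1 < max 1 (f j (sol w) / f j x')),
          max 1 (f j (sol w) / f j x')) ≤ p + ε ∧
      ∃ i : Fin p, f i (sol w) ≤ f i x' := by
  intro x'
  have hb : 1 < 1 + ε' := by rw [hε']; linarith [div_pos hε (Nat.cast_pos.2 hp)]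
  have hb0 : 0 < 1 + ε' := zero_lt_one.trans hb
  choose n hn_lo hn_hi using fun j =>
    exists_nat_pow_near ((one_le_div (hLB j)).mpr (hlo x' j)) hb
  obtain ⟨k, -, hk⟩ := univ.exists_min_image n ⟨⟨0, hp⟩, mem_univ _⟩
  set w : Fin p → ℝ := fun j => 1 / (LB j * (1 + ε') ^ (n j - n k))
  have hw : ∀ j, 0 < w j := fun j => by have := hLB j; positivity
  have hwW : w ∈ W := by
    refine hW ▸ ⟨fun j => n j - n k, fun j => ?_, ⟨k, Nat.sub_self _⟩, fun j => rfl⟩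
    have hnu : (n j : ℤ) ≤ u j := hu j ▸ Real.natCast_le_floor_logb_of_pow_le hb
      ((hn_lo j).trans (div_le_div_of_nonneg_right (hhi x' j) (hLB j).le))
    exact (Nat.sub_le _ _).trans (by exact_mod_cast hnu)
  have hwf : ∀ j, w j * f j x' = f j x' / LB j / (1 + ε') ^ (n j - n k) := fun j => by
    simp only [w]
    field_simp
  have hbounds := fun j =>
    pow_le_div_pow_sub_and_div_pow_sub_le hb0 (hk j (mem_univ j)) (hn_lo j) (hn_hi j)
  have hopt := hsol w hw x'
  have hne : Nonempty (Fin p) := ⟨⟨0, hp⟩⟩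
  refine ⟨w, hwW, ?_, exists_le_of_weighted_sum_le hw hopt⟩
  calc _ ≤ Fintype.card (Fin p) * (1 + ε') :=
        sum_filter_max_one_div_le_card_mul hw (fun j => (hf j _).le) (pow_pos hb0 (n k))
          (fun j => hwf j ▸ (hbounds j).1) (fun j => hwf j ▸ (hbounds j).2) hopt
    _ = p + ε := by
        rw [Fintype.card_fin, hε']
        field_simp

open Finset in
/-- Corollary 3.4: if the weighted sum problem is solved exactly, Algorithm 1
outputs a multi-factor A-approximation where every feasible solution x' is
approximated by some solution sol(w), w ∈ W, with factors
α_j = max{1, f_j(sol w)/f_j(x')} satisfying ∑_{j : α_j > 1} α_j ≤ p + ε and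
α_i = 1 (i.e., f_i(sol w) ≤ f_i(x')) for at least one i. -/
theorem multi_factor_approx_min_exact_ws
    {X : Type*} [Nonempty X] (p : ℕ) (hp : 1 ≤ p)
    (f : Fin p → X → ℝ) (hf : ∀ j x, 0 < f j x)
    (LB UB : Fin p → ℝ) (hLB : ∀ j, 0 < LB j)
    (hlo : ∀ x j, LB j ≤ f j x) (hhi : ∀ x j, f j x ≤ UB j)
    (ε : ℝ) (hε : 0 < ε)
    (ε' : ℝ) (hε' : ε' = ε / p)
    (u : Fin p → ℕ) (hu : ∀ j, (u j : ℤ) = ⌊Real.logb (1 + ε') (UB j / LB j)⌋)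
    (sol : (Fin p → ℝ) → X)
    (hsol : ∀ w : Fin p → ℝ, (∀ j, 0 < w j) →
      ∀ x : X, ∑ j, w j * f j (sol w) ≤ ∑ j, w j * f j x)
    (W : Set (Fin p → ℝ))
    (hW : W = {w | ∃ i : Fin p → ℕ, (∀ j, i j ≤ u j) ∧ (∃ k, i k = 0) ∧
      ∀ j, w j = 1 / (LB j * (1 + ε') ^ (i j))}) :
    ∀ x' : X, ∃ w ∈ W,
      (∑ j ∈ univ.filter (fun j => 1 < max 1 (f j (sol w) / f j x')),
          max 1 (f j (sol w) / f j x')) ≤ p + ε ∧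
      ∃ i : Fin p, f i (sol w) ≤ f i x' :=
  multi_factor_approx_min_exact_ws_general p hp f hf LB UB hLB hlo hhi ε hε ε' hε' u hu sol hsol W
    hW
end

section
/- Let X be a nonempty set, let p ≥ 1, and let f_1,…,f_p : X → ℝ satisfy f_j(x) > 0 for all x ∈ X and all j. Let 0 < LB(j) ≤ f_j(x) ≤ UB(j) hold for all x ∈ X and all j, let ε > 0, let σ ≥ 1, and set ε' := ε/(σ·p) and u_j := ⌊log_{1+ε'}(UB(j)/LB(j))⌋ for each j. Suppose that for every w ∈ ℝ^p with w_j > 0 for all j there is a solution sol(w) ∈ X with ∑_{j=1}^p w_j·f_j(sol(w)) ≤ σ·∑_{j=1}^p w_j·f_j(x) for all x ∈ X. Let W be the set of all weight vectors w with w_j = 1/(LB(j)·(1+ε')^{i_j}) where i_j ∈ {0,…,u_j} for all j and i_k = 0 for at least one k, and let P := {sol(w) : w ∈ W}. Then P is a (σ·p+ε,…,σ·p+ε)-approximation: for every x' ∈ X there exists x ∈ P with f_j(x) ≤ (σ·p + ε)·f_j(x') for all j = 1,…,p. -/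
/-!
Fix x' and let b = 1 + ε'. Put f_j(x') / LB(j) into the geometric bucket [b^{a_j}, b^{a_j+1}) and
shift the exponents so that the smallest one becomes 0: with i_j = a_j - min a, the grid weight
w_j = 1 / (LB(j) b^{i_j}) makes all weighted values w_j f_j(x') lie in one bucket [c, b c].
For such balanced weights a σ-approximation y of the weighted sum problem satisfies
w_j f_j(y) ≤ ∑ w_l f_l(y) ≤ σ ∑ w_l f_l(x') ≤ σ p b c ≤ σ p b · w_j f_j(x'),
and σ p b = σ p + ε by the choice of ε'.
-/

open Real

namespace Real

variable {b r : ℝ}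

theorem zpow_floor_logb_le (hb : 1 < b) (hr : 0 < r) : b ^ ⌊logb b r⌋ ≤ r := by
  rw [← rpow_intCast, ← le_logb_iff_rpow_le hb hr]
  exact Int.floor_le _

theorem lt_zpow_floor_logb_add_one (hb : 1 < b) (hr : 0 < r) : r < b ^ (⌊logb b r⌋ + 1) := by
  rw [← rpow_intCast, ← logb_lt_iff_lt_rpow hb hr]
  push_cast
  exact Int.lt_floor_add_one _

theorem div_pow_mem_Icc_of_floor_logb_eq {m : ℤ} {i : ℕ} (hb : 1 < b) (hr : 0 < r)
    (h : ⌊logb b r⌋ = m + i) : r / b ^ i ∈ Set.Icc (b ^ m) (b * b ^ m) := by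
  have hbi : 0 < b ^ i := pow_pos (by linarith) i
  have hsplit : ∀ n : ℤ, b ^ (n + i) = b ^ n * b ^ i := fun n => by
    rw [zpow_add₀ (by positivity), zpow_natCast]
  constructor
  · rw [le_div_iff₀ hbi, ← hsplit, ← h]
    exact zpow_floor_logb_le hb hr
  · rw [div_le_iff₀ hbi, ← zpow_one_add₀ (by positivity), ← hsplit, add_comm 1 m,
      add_right_comm, ← h]
    exact (lt_zpow_floor_logb_add_one hb hr).le

end Real

theorem exists_forall_eq_add_natCast {ι : Type*} [Finite ι] [Nonempty ι] (a : ι → ℤ) :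
    ∃ k, ∃ i : ι → ℕ, i k = 0 ∧ ∀ j, a j = a k + i j := by
  obtain ⟨k, hk⟩ := Finite.exists_min a
  refine ⟨k, fun j => (a j - a k).toNat, by simp, fun j => ?_⟩
  rw [Int.toNat_of_nonneg (sub_nonneg.mpr (hk j))]
  ring

theorem exists_pow_grid_balanced {ι : Type*} [Finite ι] [Nonempty ι] {b : ℝ} (hb : 1 < b)
    {r : ι → ℝ} (hr : ∀ j, 1 ≤ r j) :
    ∃ i : ι → ℕ, (∃ k, i k = 0) ∧ (∀ j, (i j : ℤ) ≤ ⌊logb b (r j)⌋) ∧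
      ∃ c, ∀ j, r j / b ^ i j ∈ Set.Icc c (b * c) := by
  obtain ⟨k, i, hik, ha⟩ := exists_forall_eq_add_natCast fun j => ⌊logb b (r j)⌋
  have hm : 0 ≤ ⌊logb b (r k)⌋ := Int.floor_nonneg.mpr (logb_nonneg hb (hr k))
  exact ⟨i, ⟨k, hik⟩, fun j => by rw [ha j]; omega, b ^ ⌊logb b (r k)⌋,
    fun j => div_pow_mem_Icc_of_floor_logb_eq hb (one_pos.trans_le (hr j)) (ha j)⟩

theorem le_mul_of_sum_mul_le_of_balanced {ι : Type*} [Fintype ι] {w v v' : ι → ℝ}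
    {σ b c : ℝ} (hw : ∀ l, 0 < w l) (hv : ∀ l, 0 ≤ v l) (hσ : 0 ≤ σ) (hb : 0 ≤ b)
    (hc : ∀ l, w l * v' l ∈ Set.Icc c (b * c))
    (hsum : ∑ l, w l * v l ≤ σ * ∑ l, w l * v' l) (j : ι) :
    v j ≤ σ * Fintype.card ι * b * v' j := by
  have hsum' : ∑ l, w l * v' l ≤ Fintype.card ι * (b * c) := calc
    ∑ l, w l * v' l ≤ ∑ _l : ι, b * c := Finset.sum_le_sum fun l _ => (hc l).2
    _ = Fintype.card ι * (b * c) := by simp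
  refine le_of_mul_le_mul_left ?_ (hw j)
  calc w j * v j ≤ ∑ l, w l * v l :=
        Finset.single_le_sum (fun l _ => mul_nonneg (hw l).le (hv l)) (Finset.mem_univ j)
    _ ≤ σ * ∑ l, w l * v' l := hsum
    _ ≤ σ * (Fintype.card ι * (b * c)) := by gcongr
    _ = σ * Fintype.card ι * b * c := by ring
    _ ≤ σ * Fintype.card ι * b * (w j * v' j) := by gcongr; exact (hc j).1
    _ = w j * (σ * Fintype.card ι * b * v' j) := by ring

theorem classical_approx_min_general
    {X : Type*} (p : ℕ) (hp : 1 ≤ p)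
    (f : Fin p → X → ℝ) (hf : ∀ j x, 0 < f j x)
    (LB UB : Fin p → ℝ) (hLB : ∀ j, 0 < LB j)
    (hlo : ∀ x j, LB j ≤ f j x) (hhi : ∀ x j, f j x ≤ UB j)
    (ε : ℝ) (hε : 0 < ε) (σ : ℝ) (hσ : 1 ≤ σ)
    (ε' : ℝ) (hε' : ε' = ε / (σ * p))
    (u : Fin p → ℕ) (hu : ∀ j, (u j : ℤ) = ⌊Real.logb (1 + ε') (UB j / LB j)⌋)
    (sol : (Fin p → ℝ) → X)
    (hsol : ∀ w : Fin p → ℝ, (∀ j, 0 < w j) →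
      ∀ x : X, ∑ j, w j * f j (sol w) ≤ σ * ∑ j, w j * f j x)
    (W : Set (Fin p → ℝ))
    (hW : W = {w | ∃ i : Fin p → ℕ, (∀ j, i j ≤ u j) ∧ (∃ k, i k = 0) ∧
      ∀ j, w j = 1 / (LB j * (1 + ε') ^ (i j))}) :
    ∀ x' : X, ∃ w ∈ W, ∀ j : Fin p, f j (sol w) ≤ (σ * p + ε) * f j x' := by
  intro x'
  have : Nonempty (Fin p) := ⟨⟨0, hp⟩⟩
  set b := 1 + ε'
  have hb : 1 < b := by simp only [b, hε']; linarith [show 0 < ε / (σ * p) by positivity]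
  have hr : ∀ j, 1 ≤ f j x' / LB j := fun j => (one_le_div (hLB j)).mpr (hlo x' j)
  obtain ⟨i, ⟨k, hik⟩, hi, c, hc⟩ := exists_pow_grid_balanced hb hr
  have hiu : ∀ j, i j ≤ u j := fun j => by
    have hmono := Int.floor_mono (logb_le_logb_of_le hb (one_pos.trans_le (hr j))
      (div_le_div_of_nonneg_right (hhi x' j) (hLB j).le))
    have := hi j
    have := hu j
    omega
  set w : Fin p → ℝ := fun j => 1 / (LB j * b ^ i j)
  have hw : ∀ j, 0 < w j := fun j => one_div_pos.mpr (mul_pos (hLB j) (pow_pos (by linarith) _))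
  refine ⟨w, hW ▸ ⟨i, hiu, ⟨k, hik⟩, fun j => rfl⟩, fun j => ?_⟩
  have hbal : ∀ l, w l * f l x' ∈ Set.Icc c (b * c) := fun l => by
    rw [show w l * f l x' = f l x' / LB l / b ^ i l by simp only [w]; field_simp]
    exact hc l
  have happrox := le_mul_of_sum_mul_le_of_balanced hw (fun l => (hf l (sol w)).le)
    (by linarith) (by linarith) hbal (hsol w hw x') j
  rwa [Fintype.card_fin, show σ * p * b = σ * p + ε by simp only [b, hε']; field_simp] at happrox

/-- Corollary 3.6: Algorithm 1 computes a (σ·p+ε,…,σ·p+ε)-approximation, i.e.,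
for every feasible solution x' there is a solution sol(w), w ∈ W, with
f_j(sol w) ≤ (σ·p + ε)·f_j(x') for all j. -/
theorem classical_approx_min
    {X : Type*} [Nonempty X] (p : ℕ) (hp : 1 ≤ p)
    (f : Fin p → X → ℝ) (hf : ∀ j x, 0 < f j x)
    (LB UB : Fin p → ℝ) (hLB : ∀ j, 0 < LB j)
    (hlo : ∀ x j, LB j ≤ f j x) (hhi : ∀ x j, f j x ≤ UB j)
    (ε : ℝ) (hε : 0 < ε) (σ : ℝ) (hσ : 1 ≤ σ)
    (ε' : ℝ) (hε' : ε' = ε / (σ * p))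
    (u : Fin p → ℕ) (hu : ∀ j, (u j : ℤ) = ⌊Real.logb (1 + ε') (UB j / LB j)⌋)
    (sol : (Fin p → ℝ) → X)
    (hsol : ∀ w : Fin p → ℝ, (∀ j, 0 < w j) →
      ∀ x : X, ∑ j, w j * f j (sol w) ≤ σ * ∑ j, w j * f j x)
    (W : Set (Fin p → ℝ))
    (hW : W = {w | ∃ i : Fin p → ℕ, (∀ j, i j ≤ u j) ∧ (∃ k, i k = 0) ∧
      ∀ j, w j = 1 / (LB j * (1 + ε') ^ (i j))}) :
    ∀ x' : X, ∃ w ∈ W, ∀ j : Fin p, f j (sol w) ≤ (σ * p + ε) * f j x' :=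
  classical_approx_min_general p hp f hf LB UB hLB hlo hhi ε hε σ hσ ε' hε' u hu sol hsol W hW
end

section
/- Let X be a nonempty set and let f_1, f_2 : X → ℝ satisfy f_j(x) > 0 for all x ∈ X and j = 1,2. Let 0 < LB(j) ≤ f_j(x) ≤ UB(j) hold for all x ∈ X and j = 1,2, let ε > 0, and set ε' := ε/2 and u_j := ⌊log_{1+ε'}(UB(j)/LB(j))⌋ for j = 1,2. Suppose that for every w ∈ ℝ^2 with w_1, w_2 > 0 there is a solution sol(w) ∈ X minimizing w_1·f_1(x) + w_2·f_2(x) over x ∈ X. Let W be the set of all weight vectors w with w_j = 1/(LB(j)·(1+ε')^{i_j}) where i_j ∈ {0,…,u_j} for j = 1,2 and i_1 = 0 or i_2 = 0, and let P := {sol(w) : w ∈ W}. Then P is a {(1,2+ε),(2+ε,1)}-approximation: for every x' ∈ X there exists x ∈ P such that either (f_1(x) ≤ f_1(x') and f_2(x) ≤ (2+ε)·f_2(x')) or (f_1(x) ≤ (2+ε)·f_1(x') and f_2(x) ≤ f_2(x')). -/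
/-!
Fix `x'` and let `b = 1 + ε/2`. Round each `f_j(x')` down to the grid point
`A_j = LB_j b^{k_j}`, so that `A_j ≤ f_j(x') < b A_j`, and shift both exponents by
`min k₁ k₂`; the resulting grid weight is a positive multiple of `(1/A₁, 1/A₂)`, so
`w_j f_j(x')` lies in a common window `[c, b c]`. For a minimizer `x` of that weighted sum,
`w₂ f₂(x) ≤ w₁ f₁(x') + w₂ f₂(x') ≤ (1 + b) w₂ f₂(x')`, and symmetrically; whichever of
`f₁(x) ≤ f₁(x')`, `f₁(x) > f₁(x')` holds then gives one of the two approximation guarantees.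
-/

open Real

section WeightedSum

variable {w₁ w₂ y₁ y₂ z₁ z₂ b c : ℝ}

theorem le_one_add_mul_of_weighted_sum_le (hw₁ : 0 ≤ w₁) (hw₂ : 0 < w₂) (hy₁ : 0 ≤ y₁)
    (hb : 0 ≤ b) (hz₁ : w₁ * z₁ ≤ b * c) (hz₂ : c ≤ w₂ * z₂)
    (hsum : w₁ * y₁ + w₂ * y₂ ≤ w₁ * z₁ + w₂ * z₂) :
    y₂ ≤ (1 + b) * z₂ := by
  have hwy₁ : 0 ≤ w₁ * y₁ := mul_nonneg hw₁ hy₁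
  have hbc : b * c ≤ b * (w₂ * z₂) := mul_le_mul_of_nonneg_left hz₂ hb
  refine le_of_mul_le_mul_left ?_ hw₂
  linarith

theorem weighted_sum_le_disjunctive (hw₁ : 0 < w₁) (hw₂ : 0 < w₂) (hy₁ : 0 ≤ y₁)
    (hy₂ : 0 ≤ y₂) (hb : 0 ≤ b) (hz₁ : w₁ * z₁ ∈ Set.Icc c (b * c))
    (hz₂ : w₂ * z₂ ∈ Set.Icc c (b * c))
    (hsum : w₁ * y₁ + w₂ * y₂ ≤ w₁ * z₁ + w₂ * z₂) :
    (y₁ ≤ z₁ ∧ y₂ ≤ (1 + b) * z₂) ∨ (y₁ ≤ (1 + b) * z₁ ∧ y₂ ≤ z₂) := by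
  by_cases hy : y₁ ≤ z₁
  · exact .inl ⟨hy, le_one_add_mul_of_weighted_sum_le hw₁.le hw₂ hy₁ hb hz₁.2 hz₂.1 hsum⟩
  · refine .inr ⟨le_one_add_mul_of_weighted_sum_le hw₂.le hw₁ hy₂ hb hz₂.2 hz₁.1
      (by linarith), ?_⟩
    have : w₁ * z₁ < w₁ * y₁ := mul_lt_mul_of_pos_left (not_le.mp hy) hw₁
    exact le_of_mul_le_mul_left (by linarith) hw₂

end WeightedSum

section Grid

variable {b L U t : ℝ}

theorem exists_le_floor_logb_mul_pow_le_lt (hb : 1 < b) (hL : 0 < L) (hLt : L ≤ t)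
    (htU : t ≤ U) {u : ℕ} (hu : (u : ℤ) = ⌊logb b (U / L)⌋) :
    ∃ k ≤ u, L * b ^ k ≤ t ∧ t < L * b ^ (k + 1) := by
  obtain ⟨k, hkt, htk⟩ := exists_nat_pow_near ((one_le_div hL).mpr hLt) hb
  have hUL : 1 ≤ U / L := (one_le_div hL).mpr (hLt.trans htU)
  have hkU : b ^ k ≤ U / L := hkt.trans (by gcongr)
  have hku : (k : ℤ) ≤ u := by
    rw [hu, Int.le_floor, Int.cast_natCast, le_logb_iff_rpow_le hb (by positivity),
      rpow_natCast]
    exact hkU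
  refine ⟨k, by exact_mod_cast hku, ?_, ?_⟩
  · rwa [le_div_iff₀ hL, mul_comm] at hkt
  · rwa [div_lt_iff₀ hL, mul_comm] at htk

theorem one_div_mul_pow_sub_mul_mem_Icc (hb : 0 < b) (hL : 0 < L) {k m : ℕ} (hmk : m ≤ k)
    (hkt : L * b ^ k ≤ t) (htk : t ≤ L * b ^ (k + 1)) :
    1 / (L * b ^ (k - m)) * t ∈ Set.Icc (b ^ m) (b * b ^ m) := by
  have hsplit : b ^ k = b ^ (k - m) * b ^ m := by rw [← pow_add, Nat.sub_add_cancel hmk]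
  have hLbk : 0 < L * b ^ k := by positivity
  have heq : 1 / (L * b ^ (k - m)) * t = b ^ m * (t / (L * b ^ k)) := by
    rw [hsplit]
    field_simp
  have hlo : 1 ≤ t / (L * b ^ k) := (one_le_div hLbk).mpr hkt
  have hhi : t / (L * b ^ k) ≤ b := by
    rw [div_le_iff₀ hLbk]
    exact htk.trans_eq (by ring)
  have hbm : 0 ≤ b ^ m := by positivity
  rw [heq]
  exact ⟨le_mul_of_one_le_right hbm hlo,
    (mul_le_mul_of_nonneg_left hhi hbm).trans_eq (mul_comm _ _)⟩

end Grid

theorem biobjective_disjunctive_approx_general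
    {X : Type*}
    (f₁ f₂ : X → ℝ) (hf₁ : ∀ x, 0 < f₁ x) (hf₂ : ∀ x, 0 < f₂ x)
    (LB₁ LB₂ UB₁ UB₂ : ℝ) (hLB₁ : 0 < LB₁) (hLB₂ : 0 < LB₂)
    (hlo₁ : ∀ x, LB₁ ≤ f₁ x) (hhi₁ : ∀ x, f₁ x ≤ UB₁)
    (hlo₂ : ∀ x, LB₂ ≤ f₂ x) (hhi₂ : ∀ x, f₂ x ≤ UB₂)
    (ε : ℝ) (hε : 0 < ε) (ε' : ℝ) (hε' : ε' = ε / 2)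
    (u₁ u₂ : ℕ)
    (hu₁ : (u₁ : ℤ) = ⌊Real.logb (1 + ε') (UB₁ / LB₁)⌋)
    (hu₂ : (u₂ : ℤ) = ⌊Real.logb (1 + ε') (UB₂ / LB₂)⌋)
    (sol : ℝ → ℝ → X)
    (hsol : ∀ w₁ w₂ : ℝ, 0 < w₁ → 0 < w₂ →
      ∀ x : X, w₁ * f₁ (sol w₁ w₂) + w₂ * f₂ (sol w₁ w₂) ≤ w₁ * f₁ x + w₂ * f₂ x) :
    ∀ x' : X, ∃ i₁ i₂ : ℕ, i₁ ≤ u₁ ∧ i₂ ≤ u₂ ∧ (i₁ = 0 ∨ i₂ = 0) ∧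
      ∃ x : X, x = sol (1 / (LB₁ * (1 + ε') ^ i₁)) (1 / (LB₂ * (1 + ε') ^ i₂)) ∧
        ((f₁ x ≤ f₁ x' ∧ f₂ x ≤ (2 + ε) * f₂ x') ∨
         (f₁ x ≤ (2 + ε) * f₁ x' ∧ f₂ x ≤ f₂ x')) := by
  intro x'
  have hb : 1 < 1 + ε' := by linarith
  obtain ⟨k₁, hk₁u, hk₁⟩ := exists_le_floor_logb_mul_pow_le_lt hb hLB₁ (hlo₁ x') (hhi₁ x') hu₁
  obtain ⟨k₂, hk₂u, hk₂⟩ := exists_le_floor_logb_mul_pow_le_lt hb hLB₂ (hlo₂ x') (hhi₂ x') hu₂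
  set m := min k₁ k₂
  refine ⟨k₁ - m, k₂ - m, by omega, by omega, by omega, _, rfl, ?_⟩
  have hw₁ := one_div_mul_pow_sub_mul_mem_Icc (by linarith) hLB₁ (min_le_left k₁ k₂)
    hk₁.1 hk₁.2.le
  have hw₂ := one_div_mul_pow_sub_mul_mem_Icc (by linarith) hLB₂ (min_le_right k₁ k₂)
    hk₂.1 hk₂.2.le
  have hα : ∀ z > 0, (1 + (1 + ε')) * z ≤ (2 + ε) * z := fun z hz =>
    mul_le_mul_of_nonneg_right (by linarith) hz.le
  refine (weighted_sum_le_disjunctive (by positivity) (by positivity) (hf₁ _).le (hf₂ _).le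
    (by linarith) hw₁ hw₂ (hsol _ _ (by positivity) (by positivity) x')).imp ?_ ?_
  · exact fun h => ⟨h.1, h.2.trans (hα _ (hf₂ x'))⟩
  · exact fun h => ⟨h.1.trans (hα _ (hf₁ x')), h.2⟩

/-- Corollary 3.7 (biobjective, exact weighted sum algorithm): the set
P = {sol(w) : w ∈ W} obtained from the grid of weight vectors is a
{(1,2+ε),(2+ε,1)}-approximation. -/
theorem biobjective_disjunctive_approx
    {X : Type*} [Nonempty X]
    (f₁ f₂ : X → ℝ) (hf₁ : ∀ x, 0 < f₁ x) (hf₂ : ∀ x, 0 < f₂ x)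
    (LB₁ LB₂ UB₁ UB₂ : ℝ) (hLB₁ : 0 < LB₁) (hLB₂ : 0 < LB₂)
    (hlo₁ : ∀ x, LB₁ ≤ f₁ x) (hhi₁ : ∀ x, f₁ x ≤ UB₁)
    (hlo₂ : ∀ x, LB₂ ≤ f₂ x) (hhi₂ : ∀ x, f₂ x ≤ UB₂)
    (ε : ℝ) (hε : 0 < ε) (ε' : ℝ) (hε' : ε' = ε / 2)
    (u₁ u₂ : ℕ)
    (hu₁ : (u₁ : ℤ) = ⌊Real.logb (1 + ε') (UB₁ / LB₁)⌋)
    (hu₂ : (u₂ : ℤ) = ⌊Real.logb (1 + ε') (UB₂ / LB₂)⌋)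
    (sol : ℝ → ℝ → X)
    (hsol : ∀ w₁ w₂ : ℝ, 0 < w₁ → 0 < w₂ →
      ∀ x : X, w₁ * f₁ (sol w₁ w₂) + w₂ * f₂ (sol w₁ w₂) ≤ w₁ * f₁ x + w₂ * f₂ x) :
    ∀ x' : X, ∃ i₁ i₂ : ℕ, i₁ ≤ u₁ ∧ i₂ ≤ u₂ ∧ (i₁ = 0 ∨ i₂ = 0) ∧
      ∃ x : X, x = sol (1 / (LB₁ * (1 + ε') ^ i₁)) (1 / (LB₂ * (1 + ε') ^ i₂)) ∧
        ((f₁ x ≤ f₁ x' ∧ f₂ x ≤ (2 + ε) * f₂ x') ∨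
         (f₁ x ≤ (2 + ε) * f₁ x' ∧ f₂ x ≤ f₂ x')) :=
  biobjective_disjunctive_approx_general f₁ f₂ hf₁ hf₂ LB₁ LB₂ UB₁ UB₂ hLB₁ hLB₂ hlo₁ hhi₁ hlo₂ hhi₂
    ε hε ε' hε' u₁ u₂ hu₁ hu₂ sol hsol
end

section
/- Let X be a nonempty set and let f_1, f_2 : X → ℝ satisfy f_j(x) > 0 for all x ∈ X and j = 1,2. Let x̄ ∈ X, let ε > 0, and let b_1, b_2 > 0 satisfy b_j ≤ f_j(x̄) ≤ (1+ε/2)·b_j for j = 1,2. Suppose x̂ ∈ X minimizes (1/b_1)·f_1(x) + (1/b_2)·f_2(x) over x ∈ X. Then either (f_1(x̂) ≤ f_1(x̄) and f_2(x̂) ≤ (2+ε)·f_2(x̄)) or (f_1(x̂) ≤ (2+ε)·f_1(x̄) and f_2(x̂) ≤ f_2(x̄)). -/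
/-!
Dividing by `b₁ b₂`, the weighted sum of `x̂` is at most that of `x̄`, which is at most
`2 (1 + ε/2) = 2 + ε` since `f_j(x̄) ≤ (1 + ε/2) b_j`. One of the normalized objectives of `x̂` does
not exceed that of `x̄`; the other, being part of a sum of positive terms bounded by `2 + ε`, is at
most `2 + ε`, i.e. `f_j(x̂) ≤ (2 + ε) b_j ≤ (2 + ε) f_j(x̄)`.
-/

theorem le_and_le_or_le_and_le_of_add_le_add {u₁ u₂ v₁ v₂ c : ℝ} (hu₁ : 0 ≤ u₁) (hu₂ : 0 ≤ u₂)
    (h : u₁ + u₂ ≤ v₁ + v₂) (hv : v₁ + v₂ ≤ c) :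
    (u₁ ≤ v₁ ∧ u₂ ≤ c) ∨ (u₁ ≤ c ∧ u₂ ≤ v₂) := by
  rcases le_or_gt u₁ v₁ with h₁ | h₁
  · exact Or.inl ⟨h₁, by linarith⟩
  · exact Or.inr ⟨by linarith, by linarith⟩

theorem le_mul_of_div_le_of_le {x y b c : ℝ} (hb : 0 < b) (hby : b ≤ y) (hc : 0 ≤ c)
    (h : x / b ≤ c) : x ≤ c * y :=
  ((div_le_iff₀ hb).1 h).trans (mul_le_mul_of_nonneg_left hby hc)

theorem div_add_div_le_of_le_mul {y₁ y₂ b₁ b₂ t : ℝ} (hb₁ : 0 < b₁) (hb₂ : 0 < b₂)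
    (h₁ : y₁ ≤ t * b₁) (h₂ : y₂ ≤ t * b₂) : y₁ / b₁ + y₂ / b₂ ≤ 2 * t := by
  have := (div_le_iff₀ hb₁).2 h₁
  have := (div_le_iff₀ hb₂).2 h₂
  linarith

theorem biobjective_one_weighted_sum_general
    {X : Type*}
    (f₁ f₂ : X → ℝ) (hf₁ : ∀ x, 0 < f₁ x) (hf₂ : ∀ x, 0 < f₂ x)
    (xbar : X) (ε : ℝ) (hε : 0 < ε)
    (b₁ b₂ : ℝ) (hb₁ : 0 < b₁) (hb₂ : 0 < b₂)
    (hblo₁ : b₁ ≤ f₁ xbar) (hbhi₁ : f₁ xbar ≤ (1 + ε / 2) * b₁)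
    (hblo₂ : b₂ ≤ f₂ xbar) (hbhi₂ : f₂ xbar ≤ (1 + ε / 2) * b₂)
    (xhat : X)
    (hxhat : ∀ x : X, (1 / b₁) * f₁ xhat + (1 / b₂) * f₂ xhat ≤
      (1 / b₁) * f₁ x + (1 / b₂) * f₂ x) :
    (f₁ xhat ≤ f₁ xbar ∧ f₂ xhat ≤ (2 + ε) * f₂ xbar) ∨
    (f₁ xhat ≤ (2 + ε) * f₁ xbar ∧ f₂ xhat ≤ f₂ xbar) := by
  have hsum : f₁ xhat / b₁ + f₂ xhat / b₂ ≤ f₁ xbar / b₁ + f₂ xbar / b₂ := by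
    simpa only [one_div_mul_eq_div] using hxhat xbar
  have hbar : f₁ xbar / b₁ + f₂ xbar / b₂ ≤ 2 + ε := by
    linarith [div_add_div_le_of_le_mul hb₁ hb₂ hbhi₁ hbhi₂]
  have hc : (0 : ℝ) ≤ 2 + ε := by positivity
  rcases le_and_le_or_le_and_le_of_add_le_add (div_pos (hf₁ xhat) hb₁).le
    (div_pos (hf₂ xhat) hb₂).le hsum hbar with ⟨h₁, h₂⟩ | ⟨h₁, h₂⟩
  · exact Or.inl ⟨(div_le_div_iff_of_pos_right hb₁).1 h₁, le_mul_of_div_le_of_le hb₂ hblo₂ hc h₂⟩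
  · exact Or.inr ⟨le_mul_of_div_le_of_le hb₁ hblo₁ hc h₁, (div_le_div_iff_of_pos_right hb₂).1 h₂⟩

/-- Biobjective version of Proposition 3.2 with an exact weighted sum algorithm:
if b_j ≤ f_j(x̄) ≤ (1+ε/2)·b_j and x̂ minimizes (1/b₁)·f₁ + (1/b₂)·f₂, then x̂
(1,2+ε)- or (2+ε,1)-approximates x̄. -/
theorem biobjective_one_weighted_sum
    {X : Type*} [Nonempty X]
    (f₁ f₂ : X → ℝ) (hf₁ : ∀ x, 0 < f₁ x) (hf₂ : ∀ x, 0 < f₂ x)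
    (xbar : X) (ε : ℝ) (hε : 0 < ε)
    (b₁ b₂ : ℝ) (hb₁ : 0 < b₁) (hb₂ : 0 < b₂)
    (hblo₁ : b₁ ≤ f₁ xbar) (hbhi₁ : f₁ xbar ≤ (1 + ε / 2) * b₁)
    (hblo₂ : b₂ ≤ f₂ xbar) (hbhi₂ : f₂ xbar ≤ (1 + ε / 2) * b₂)
    (xhat : X)
    (hxhat : ∀ x : X, (1 / b₁) * f₁ xhat + (1 / b₂) * f₂ xhat ≤
      (1 / b₁) * f₁ x + (1 / b₂) * f₂ x) :
    (f₁ xhat ≤ f₁ xbar ∧ f₂ xhat ≤ (2 + ε) * f₂ xbar) ∨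
    (f₁ xhat ≤ (2 + ε) * f₁ xbar ∧ f₂ xhat ≤ f₂ xbar) :=
  biobjective_one_weighted_sum_general f₁ f₂ hf₁ hf₂ xbar ε hε b₁ b₂ hb₁ hb₂ hblo₁ hbhi₁ hblo₂ hbhi₂
    xhat hxhat
end

section
/- Let X be a nonempty set and let f_1, f_2 : X → ℝ satisfy f_j(x) > 0 for all x ∈ X and j = 1,2. Let γ_ℓ > γ_i > γ_t > 0, let β ≥ 1, and suppose x^ℓ, x^i, x^t ∈ X minimize γ·f_1(z) + f_2(z) over z ∈ X for γ = γ_ℓ, γ_i, γ_t, respectively. If f_2(x^ℓ) ≤ β·f_2(x^t) (i.e., x^ℓ (1,β)-approximates x^t in the second objective), then f_1(x^ℓ) ≤ f_1(x^i) and f_2(x^ℓ) ≤ β·f_2(x^i), i.e., x^ℓ (1,β)-approximates x^i. Similarly, if f_1(x^t) ≤ β·f_1(x^ℓ), then f_1(x^t) ≤ β·f_1(x^i) and f_2(x^t) ≤ f_2(x^i), i.e., x^t (β,1)-approximates x^i. -/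
/-!
Along the weighted sum scalarization, optimal solutions move monotonically: raising the weight
of f₁ can only decrease f₁ and increase f₂ at the optimum (add the two optimality inequalities).
Hence x^i is squeezed between x^ℓ and x^t in both objectives, and an approximation of x^t by x^ℓ
(or of x^ℓ by x^t) passes to x^i.
-/

section WeightedSum

variable {X 𝕜 : Type*} [CommRing 𝕜] [LinearOrder 𝕜] [IsStrictOrderedRing 𝕜]

def IsWeightedSumMin (f₁ f₂ : X → 𝕜) (γ : 𝕜) (x : X) : Prop :=
  ∀ z, γ * f₁ x + f₂ x ≤ γ * f₁ z + f₂ z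

variable {f₁ f₂ : X → 𝕜} {γ γ' : 𝕜} {x y : X}

theorem IsWeightedSumMin.fst_anti (hx : IsWeightedSumMin f₁ f₂ γ x)
    (hy : IsWeightedSumMin f₁ f₂ γ' y) (hγ : γ < γ') : f₁ y ≤ f₁ x := by
  have key : (γ' - γ) * (f₁ y - f₁ x) ≤ 0 := by linarith [hx y, hy x]
  exact sub_nonpos.mp (nonpos_of_mul_nonpos_right key (sub_pos.mpr hγ))

theorem IsWeightedSumMin.snd_mono (hx : IsWeightedSumMin f₁ f₂ γ x)
    (hy : IsWeightedSumMin f₁ f₂ γ' y) (hγ₀ : 0 ≤ γ) (hγ : γ < γ') : f₂ x ≤ f₂ y := by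
  have hf₁ : 0 ≤ γ * (f₁ x - f₁ y) :=
    mul_nonneg hγ₀ (sub_nonneg.mpr (hx.fst_anti hy hγ))
  linarith [hx y]

end WeightedSum

theorem intermediate_weights_superfluous_general
    {X : Type*}
    (f₁ f₂ : X → ℝ)
    (γℓ γi γt : ℝ) (hγt : 0 < γt) (hti : γt < γi) (hiℓ : γi < γℓ)
    (β : ℝ) (hβ : 1 ≤ β)
    (xℓ xi xt : X)
    (hxℓ : ∀ z : X, γℓ * f₁ xℓ + f₂ xℓ ≤ γℓ * f₁ z + f₂ z)
    (hxi : ∀ z : X, γi * f₁ xi + f₂ xi ≤ γi * f₁ z + f₂ z)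
    (hxt : ∀ z : X, γt * f₁ xt + f₂ xt ≤ γt * f₁ z + f₂ z) :
    (f₂ xℓ ≤ β * f₂ xt → f₁ xℓ ≤ f₁ xi ∧ f₂ xℓ ≤ β * f₂ xi) ∧
    (f₁ xt ≤ β * f₁ xℓ → f₁ xt ≤ β * f₁ xi ∧ f₂ xt ≤ f₂ xi) := by
  have hxℓ : IsWeightedSumMin f₁ f₂ γℓ xℓ := hxℓ
  have hxi : IsWeightedSumMin f₁ f₂ γi xi := hxi
  have hxt : IsWeightedSumMin f₁ f₂ γt xt := hxt
  have hβ₀ : 0 ≤ β := zero_le_one.trans hβ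
  have hf₁ : f₁ xℓ ≤ f₁ xi := hxi.fst_anti hxℓ hiℓ
  have hf₂ : f₂ xt ≤ f₂ xi := hxt.snd_mono hxi hγt.le hti
  exact ⟨fun h ↦ ⟨hf₁, h.trans (mul_le_mul_of_nonneg_left hf₂ hβ₀)⟩,
    fun h ↦ ⟨h.trans (mul_le_mul_of_nonneg_left hf₁ hβ₀), hf₂⟩⟩

/-- Key step in the proof of Theorem 3.8: intermediate weighted sum optima are
approximated. If x^ℓ, x^i, x^t are optimal for the weights γ_ℓ > γ_i > γ_t > 0
(each paired with weight 1 on f₂), then: if x^ℓ (1,β)-approximates x^t in the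
second objective, x^ℓ (1,β)-approximates x^i; and if x^t β-approximates x^ℓ in
the first objective, x^t (β,1)-approximates x^i. -/
theorem intermediate_weights_superfluous
    {X : Type*} [Nonempty X]
    (f₁ f₂ : X → ℝ) (hf₁ : ∀ x, 0 < f₁ x) (hf₂ : ∀ x, 0 < f₂ x)
    (γℓ γi γt : ℝ) (hγt : 0 < γt) (hti : γt < γi) (hiℓ : γi < γℓ)
    (β : ℝ) (hβ : 1 ≤ β)
    (xℓ xi xt : X)
    (hxℓ : ∀ z : X, γℓ * f₁ xℓ + f₂ xℓ ≤ γℓ * f₁ z + f₂ z)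
    (hxi : ∀ z : X, γi * f₁ xi + f₂ xi ≤ γi * f₁ z + f₂ z)
    (hxt : ∀ z : X, γt * f₁ xt + f₂ xt ≤ γt * f₁ z + f₂ z) :
    (f₂ xℓ ≤ β * f₂ xt → f₁ xℓ ≤ f₁ xi ∧ f₂ xℓ ≤ β * f₂ xi) ∧
    (f₁ xt ≤ β * f₁ xℓ → f₁ xt ≤ β * f₁ xi ∧ f₂ xt ≤ f₂ xi) :=
  intermediate_weights_superfluous_general f₁ f₂ γℓ γi γt hγt hti hiℓ β hβ xℓ xi xt hxℓ hxi hxt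
end

section
/- For every integer p ≥ 2 and every ε > 0, there exists a finite nonempty set Y ⊂ ℝ^p with y_j > 0 for all y ∈ Y and all j, and a point ỹ ∈ Y, such that for every supported point y ∈ Y (i.e., every y ∈ Y for which there exists w ∈ ℝ^p with w_j > 0 for all j and ∑_{j=1}^p w_j·y_j ≤ ∑_{j=1}^p w_j·y'_j for all y' ∈ Y) and every α ∈ ℝ^p with α_j ≥ 1 for all j, α_i = 1 for at least one index i, and the sum of α_j over all indices j with α_j > 1 equal to p − ε, the point y does not α-approximate ỹ, i.e., there exists an index j with y_j > α_j·ỹ_j. -/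
/-!
The instance consists of the `p` points `(b, …, b, a, b, …, b)` (with `a` in position `i`) and
`ỹ = (1, …, 1)`, where `1 < b`, `p - ε < (p - 1) b` and `a + (p - 1) b < p`. The last condition
puts `ỹ` strictly above the centroid of the other points, so `ỹ` is not supported. For the point
with `a` in position `i`, some other coordinate `j` has `α j < b`: otherwise every `α j` with
`j ≠ i` would exceed `1` and `∑_{α_j > 1} α j ≥ (p - 1) b > p - ε`; then `α j · ỹ_j < b`.
-/

open Finset

section

variable {ι : Type*} [Fintype ι]

def IsSupported (Y : Set (ι → ℝ)) (y : ι → ℝ) : Prop :=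
  ∃ w : ι → ℝ, (∀ j, 0 < w j) ∧ ∀ y' ∈ Y, ∑ j, w j * y j ≤ ∑ j, w j * y' j

theorem not_isSupported_of_sum_lt_card_mul {κ : Type*} [Fintype κ] [Nonempty ι]
    {Y : Set (ι → ℝ)} {y : ι → ℝ} {z : κ → ι → ℝ} (hzY : ∀ k, z k ∈ Y)
    (hz : ∀ j, ∑ k, z k j < Fintype.card κ * y j) : ¬ IsSupported Y y := by
  rintro ⟨w, hw, hmin⟩
  have hle : Fintype.card κ * ∑ j, w j * y j ≤ ∑ k, ∑ j, w j * z k j := by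
    simpa using sum_le_sum fun k (_ : k ∈ univ) => hmin (z k) (hzY k)
  have hlt : ∑ k, ∑ j, w j * z k j < Fintype.card κ * ∑ j, w j * y j := by
    calc ∑ k, ∑ j, w j * z k j = ∑ j, w j * ∑ k, z k j := by
          rw [sum_comm]; simp only [mul_sum]
      _ < ∑ j, w j * (Fintype.card κ * y j) :=
          sum_lt_sum_of_nonempty univ_nonempty fun j _ =>
            mul_lt_mul_of_pos_left (hz j) (hw j)
      _ = Fintype.card κ * ∑ j, w j * y j := by
          rw [mul_sum]; congr 1; ext j; ring
  exact (hle.trans_lt hlt).false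

theorem exists_ne_lt_of_sum_filter_one_lt_eq [DecidableEq ι] {α : ι → ℝ} {b ε : ℝ}
    (hα : ∀ j, 1 ≤ α j)
    (hsum : ∑ j ∈ univ.filter (fun j => 1 < α j), α j = Fintype.card ι - ε)
    (hb : 1 < b) (hbε : Fintype.card ι - ε < (Fintype.card ι - 1) * b) (i : ι) :
    ∃ j ≠ i, α j < b := by
  by_contra! hge
  have hsub : univ.erase i ⊆ univ.filter (fun j => 1 < α j) := fun j hj =>
    mem_filter.mpr ⟨mem_univ j, hb.trans_le (hge j (ne_of_mem_erase hj))⟩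
  have : (Fintype.card ι - 1) * b ≤ Fintype.card ι - ε := by
    calc (Fintype.card ι - 1) * b = ∑ _j ∈ univ.erase i, b := by
          rw [sum_const, card_erase_of_mem (mem_univ i), nsmul_eq_mul, card_univ,
            Nat.cast_pred (Fintype.card_pos_iff.mpr ⟨i⟩)]
      _ ≤ ∑ j ∈ univ.erase i, α j := sum_le_sum fun j hj => hge j (ne_of_mem_erase hj)
      _ ≤ ∑ j ∈ univ.filter (fun j => 1 < α j), α j :=
          sum_le_sum_of_subset_of_nonneg hsub fun j _ _ => zero_le_one.trans (hα j)
      _ = Fintype.card ι - ε := hsum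
  linarith

theorem sum_update_const_apply [DecidableEq ι] (a b : ℝ) (j : ι) :
    ∑ i, Function.update (Function.const ι b) i a j = a + (Fintype.card ι - 1) * b := by
  have hj : ∀ i, Function.update (Function.const ι b) i a j = b + if j = i then a - b else 0 := by
    intro i
    rcases eq_or_ne j i with rfl | h <;> simp [*]
  simp only [hj, sum_add_distrib, sum_ite_eq, mem_univ, if_true, sum_const, card_univ,
    nsmul_eq_mul]
  ring

theorem exists_one_lt_sub_one_mul_mem_Ioo {p : ℝ} (hp : 1 < p) {ε : ℝ} (hε : 0 < ε) :
    ∃ b, 1 < b ∧ (p - 1) * b ∈ Set.Ioo (p - ε) p := by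
  have hp1 : 0 < p - 1 := sub_pos.mpr hp
  have hlt : max 1 ((p - ε) / (p - 1)) < p / (p - 1) :=
    max_lt ((one_lt_div hp1).mpr (by linarith)) (div_lt_div_of_pos_right (by linarith) hp1)
  obtain ⟨b, hb, hbp⟩ := exists_between hlt
  rw [max_lt_iff, div_lt_iff₀' hp1] at hb
  rw [lt_div_iff₀' hp1] at hbp
  exact ⟨b, hb.1, hb.2, hbp⟩

end

open Finset in
/-- Theorem 3.10: for every p ≥ 2 and ε > 0 there is an instance of a
p-objective minimization problem (a finite set Y of positive points with a
point ỹ ∈ Y) such that no supported point α-approximates ỹ for any vector α of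
approximation factors with α_j ≥ 1 for all j, α_i = 1 for at least one i, and
∑_{j : α_j > 1} α_j = p − ε. -/
theorem supported_not_multi_factor_approx_min
    (p : ℕ) (hp : 2 ≤ p) (ε : ℝ) (hε : 0 < ε) :
    ∃ (Y : Set (Fin p → ℝ)) (ytil : Fin p → ℝ),
      Y.Finite ∧ Y.Nonempty ∧ (∀ y ∈ Y, ∀ j, 0 < y j) ∧ ytil ∈ Y ∧
      ∀ y ∈ Y,
        (∃ w : Fin p → ℝ, (∀ j, 0 < w j) ∧
          ∀ y' ∈ Y, ∑ j, w j * y j ≤ ∑ j, w j * y' j) →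
        ∀ α : Fin p → ℝ, (∀ j, 1 ≤ α j) → (∃ i, α i = 1) →
          (∑ j ∈ univ.filter (fun j => 1 < α j), α j) = p - ε →
          ∃ j, α j * ytil j < y j := by
  have hcard : Fintype.card (Fin p) = p := Fintype.card_fin p
  have : Nonempty (Fin p) := ⟨⟨0, by omega⟩⟩
  obtain ⟨b, hb1, hbε, hbp⟩ :=
    exists_one_lt_sub_one_mul_mem_Ioo (by exact_mod_cast hp : (1 : ℝ) < p) hε
  obtain ⟨a, ha, hcentroid⟩ : ∃ a : ℝ, 0 < a ∧ a + (p - 1) * b < p :=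
    ⟨(p - (p - 1) * b) / 2, by linarith, by linarith⟩
  let dip : Fin p → Fin p → ℝ := fun i => Function.update (Function.const _ b) i a
  refine ⟨insert 1 (Set.range dip), 1, (Set.finite_range dip).insert 1,
    Set.insert_nonempty _ _, ?_, Set.mem_insert _ _, ?_⟩
  · rintro y (rfl | ⟨i, rfl⟩) j
    · exact one_pos
    · by_cases hji : j = i <;> simp [dip, hji, ha, zero_lt_one.trans hb1]
  · rintro y (rfl | ⟨i, rfl⟩) hsupp α hα - hsum
    · refine absurd hsupp (not_isSupported_of_sum_lt_card_mul (z := dip)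
        (fun i => Set.mem_insert_of_mem _ ⟨i, rfl⟩) fun j => ?_)
      simp only [dip, sum_update_const_apply, hcard, Pi.one_apply, mul_one]
      exact hcentroid
    · obtain ⟨j, hji, hj⟩ := exists_ne_lt_of_sum_filter_one_lt_eq hα (by rwa [hcard]) hb1
        (by rwa [hcard]) i
      exact ⟨j, by simpa [dip, hji] using hj⟩
end

section
/- Let p ≥ 2 be an integer and M ≥ 1 a real number. Define Y := {y^1,…,y^p, ỹ} ⊂ ℝ^p, where for each ℓ the point y^ℓ has ℓ-th coordinate M and all other coordinates 1/p, and ỹ has all coordinates equal to (M+1)/p. Then, with respect to minimization over Y: (a) each y^ℓ is supported, i.e., there exists w ∈ ℝ^p with w_j > 0 for all j such that ∑_{j=1}^p w_j·y^ℓ_j ≤ ∑_{j=1}^p w_j·y'_j for all y' ∈ Y; and (b) ỹ is not supported, i.e., for every w ∈ ℝ^p with w_j > 0 for all j there exists y' ∈ Y with ∑_{j=1}^p w_j·y'_j < ∑_{j=1}^p w_j·ỹ_j. -/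
/-!
With all weights equal to one the points `y ℓ` have the same weighted sum, which is below that of
`ỹ`. For arbitrary positive weights `w`, the point `y ℓ` with `w ℓ` minimal beats `ỹ`: its weighted
sum is `w ℓ (M - 1/p) + S/p` with `S = ∑ w ≥ p w ℓ`, against `(M + 1) S / p` for `ỹ`.
-/

open Finset

section WeightedSums

variable {ι : Type*} [Fintype ι]

theorem sum_mul_ite_eq_add [DecidableEq ι] (w : ι → ℝ) (ℓ : ι) (a b : ℝ) :
    ∑ j, w j * (if j = ℓ then a else b) = w ℓ * (a - b) + b * ∑ j, w j := by
  have hsplit : ∀ j, w j * (if j = ℓ then a else b)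
      = (if j = ℓ then w j * (a - b) else 0) + b * w j := by
    intro j
    split_ifs <;> ring
  simp only [hsplit, sum_add_distrib, sum_ite_eq', mem_univ, if_true, ← mul_sum]

theorem exists_card_mul_le_sum [Nonempty ι] (w : ι → ℝ) :
    ∃ ℓ, (Fintype.card ι : ℝ) * w ℓ ≤ ∑ j, w j := by
  obtain ⟨ℓ, -, hℓ⟩ := exists_min_image univ w univ_nonempty
  refine ⟨ℓ, ?_⟩
  simpa using card_nsmul_le_sum univ w (w ℓ) fun j _ => hℓ j (mem_univ j)

end WeightedSums

theorem mul_sub_inv_add_inv_mul_lt {n M a S : ℝ} (hn : 0 < n) (hM : 0 ≤ M) (ha : 0 < a)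
    (haS : n * a ≤ S) : a * (M - 1 / n) + 1 / n * S < (M + 1) / n * S := by
  have hscaled : a * (M * n - 1) + S < (M + 1) * S := by
    nlinarith [mul_le_mul_of_nonneg_left haS hM]
  calc a * (M - 1 / n) + 1 / n * S = (a * (M * n - 1) + S) / n := by field_simp
    _ < (M + 1) * S / n := div_lt_div_of_pos_right hscaled hn
    _ = (M + 1) / n * S := by ring

/-- The instance used in the proof of Theorem 3.10: with y^ℓ having ℓ-th
coordinate M and all others 1/p, and ỹ = ((M+1)/p,…,(M+1)/p), each y^ℓ is
supported and ỹ is unsupported (for minimization). -/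
theorem instance_supported_unsupported_min
    (p : ℕ) (hp : 2 ≤ p) (M : ℝ) (hM : 1 ≤ M)
    (y : Fin p → Fin p → ℝ)
    (hy : ∀ ℓ j, y ℓ j = if j = ℓ then M else 1 / p)
    (ytil : Fin p → ℝ) (hytil : ∀ j, ytil j = (M + 1) / p)
    (Y : Set (Fin p → ℝ)) (hY : Y = insert ytil (Set.range y)) :
    (∀ ℓ : Fin p, ∃ w : Fin p → ℝ, (∀ j, 0 < w j) ∧
      ∀ y' ∈ Y, ∑ j, w j * y ℓ j ≤ ∑ j, w j * y' j) ∧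
    (∀ w : Fin p → ℝ, (∀ j, 0 < w j) →
      ∃ y' ∈ Y, ∑ j, w j * y' j < ∑ j, w j * ytil j) := by
  have hp0 : (0 : ℝ) < p := by positivity
  have : Nonempty (Fin p) := ⟨⟨0, by omega⟩⟩
  have hy_sum : ∀ (w : Fin p → ℝ) ℓ,
      ∑ j, w j * y ℓ j = w ℓ * (M - 1 / p) + 1 / p * ∑ j, w j := by
    intro w ℓ
    simp only [hy, sum_mul_ite_eq_add]
  have hytil_sum : ∀ w : Fin p → ℝ, ∑ j, w j * ytil j = (M + 1) / p * ∑ j, w j := by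
    intro w
    rw [mul_comm, sum_mul]
    simp only [hytil]
  subst hY
  constructor
  · refine fun ℓ => ⟨fun _ => 1, fun _ => one_pos, ?_⟩
    rintro y' (rfl | ⟨k, rfl⟩)
    · rw [hy_sum, hytil_sum]
      simp only [sum_const, card_univ, Fintype.card_fin, nsmul_eq_mul, mul_one]
      field_simp
      linarith
    · rw [hy_sum, hy_sum]
  · intro w hw
    obtain ⟨ℓ, hℓ⟩ := exists_card_mul_le_sum w
    rw [Fintype.card_fin] at hℓ
    refine ⟨y ℓ, Or.inr ⟨ℓ, rfl⟩, ?_⟩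
    rw [hy_sum, hytil_sum]
    exact mul_sub_inv_add_inv_mul_lt hp0 (by linarith) (hw ℓ) hℓ
end

section
/- Let p ≥ 2 be an integer and M > 1 a real number. Define Y := {y^1,…,y^p, ỹ} ⊂ ℝ^p, where for each ℓ the point y^ℓ has ℓ-th coordinate M and all other coordinates 1/p, and ỹ has all coordinates equal to M/p. Then, with respect to maximization over Y, ỹ is not supported: for every w ∈ ℝ^p with w_j > 0 for all j there exists ℓ ∈ {1,…,p} with ∑_{j=1}^p w_j·y^ℓ_j > ∑_{j=1}^p w_j·ỹ_j. -/
/-!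
Averaging argument: summing over `ℓ`, the points `y^ℓ` add up to `(M + (p - 1)/p, …)`, which
strictly dominates `p • ỹ = (M, …, M)`. Hence for positive weights the average of the
objective values of the `y^ℓ` beats the value of `ỹ`, so one of them does.
-/

open Finset

theorem exists_weighted_sum_lt_of_card_mul_lt_sum {ι κ : Type*} [Fintype ι] [Fintype κ]
    [Nonempty κ] (y : ι → κ → ℝ) (z : κ → ℝ)
    (hdom : ∀ j, Fintype.card ι * z j < ∑ ℓ, y ℓ j) (w : κ → ℝ) (hw : ∀ j, 0 < w j) :
    ∃ ℓ, ∑ j, w j * z j < ∑ j, w j * y ℓ j := by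
  suffices h : ∑ _ℓ : ι, ∑ j, w j * z j < ∑ ℓ, ∑ j, w j * y ℓ j by
    obtain ⟨ℓ, -, hℓ⟩ := exists_lt_of_sum_lt h
    exact ⟨ℓ, hℓ⟩
  calc ∑ _ℓ : ι, ∑ j, w j * z j = ∑ j, w j * (Fintype.card ι * z j) := by
        rw [sum_const, card_univ, nsmul_eq_mul, mul_sum]
        exact sum_congr rfl fun j _ => by ring
    _ < ∑ j, w j * ∑ ℓ, y ℓ j :=
        sum_lt_sum_of_nonempty univ_nonempty fun j _ => mul_lt_mul_of_pos_left (hdom j) (hw j)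
    _ = ∑ ℓ, ∑ j, w j * y ℓ j := by
        simp only [mul_sum]
        exact sum_comm

theorem sum_ite_eq_add_card_sub_one_mul {ι : Type*} [Fintype ι] [DecidableEq ι] (j : ι) (a b : ℝ) :
    ∑ ℓ, (if j = ℓ then a else b) = a + (Fintype.card ι - 1) * b := by
  have hoff : ∑ ℓ ∈ univ.erase j, (if j = ℓ then a else b) = ∑ ℓ ∈ univ.erase j, b :=
    sum_congr rfl fun ℓ hℓ => if_neg (Ne.symm (ne_of_mem_erase hℓ))
  rw [← add_sum_erase _ _ (mem_univ j), if_pos rfl, hoff, sum_const,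
    card_erase_of_mem (mem_univ j), card_univ, nsmul_eq_mul,
    Nat.cast_sub (Fintype.card_pos_iff.2 ⟨j⟩), Nat.cast_one]

theorem instance_unsupported_max_general
    (p : ℕ) (hp : 2 ≤ p) (M : ℝ)
    (y : Fin p → Fin p → ℝ)
    (hy : ∀ ℓ j, y ℓ j = if j = ℓ then M else 1 / p)
    (ytil : Fin p → ℝ) (hytil : ∀ j, ytil j = M / p) :
    ∀ w : Fin p → ℝ, (∀ j, 0 < w j) →
      ∃ ℓ : Fin p, ∑ j, w j * ytil j < ∑ j, w j * y ℓ j := by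
  have : Nonempty (Fin p) := ⟨⟨0, by omega⟩⟩
  refine exists_weighted_sum_lt_of_card_mul_lt_sum y ytil fun j => ?_
  have hpR : (2 : ℝ) ≤ p := by exact_mod_cast hp
  simp only [hy, hytil, sum_ite_eq_add_card_sub_one_mul, Fintype.card_fin]
  rw [mul_div_cancel₀ M (by positivity)]
  have : 0 < ((p : ℝ) - 1) * (1 / p) := by
    apply mul_pos <;> [linarith; positivity]
  linarith

/-- The instance used in the proof of Theorem 5.1: with y^ℓ having ℓ-th
coordinate M and all others 1/p, and ỹ = (M/p,…,M/p), the point ỹ is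
unsupported for maximization. -/
theorem instance_unsupported_max
    (p : ℕ) (hp : 2 ≤ p) (M : ℝ) (hM : 1 < M)
    (y : Fin p → Fin p → ℝ)
    (hy : ∀ ℓ j, y ℓ j = if j = ℓ then M else 1 / p)
    (ytil : Fin p → ℝ) (hytil : ∀ j, ytil j = M / p) :
    ∀ w : Fin p → ℝ, (∀ j, 0 < w j) →
      ∃ ℓ : Fin p, ∑ j, w j * ytil j < ∑ j, w j * y ℓ j :=
  instance_unsupported_max_general p hp M y hy ytil hytil
end
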